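/- If X, Y ∈ S^n satisfy −3α[[I,0],[0,I]] ≤ [[X,0],[0,−Y]] ≤ 3α[[I,−I],[−I,I]] for some α > 0, then X ≤ Y (as symmetric matrices) and moreover ‖X‖ ≤ 3α and ‖Y‖ ≤ 3α in operator norm. -/

import Mathlib

/-!
Compressing each block inequality to a diagonal block gives `-3α ≤ X ≤ 3α` and `-3α ≤ Y ≤ 3α`,
and compressing the right-hand inequality along the diagonal `x ↦ (x, x)` makes the
`3α [[I, -I], [-I, I]]` term vanish, leaving `X ≤ Y`. For a self-adjoint operator `T`,
`‖T‖ = sup |⟪T x, x⟫| / ‖x‖²`, so `-r ≤ T ≤ r` bounds the operator norm by `r`.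
-/

open Matrix

namespace ContinuousLinearMap

variable {𝕜 E : Type*} [RCLike 𝕜] [NormedAddCommGroup E] [InnerProductSpace 𝕜 E]

theorem norm_le_of_abs_reApplyInnerSelf_le {T : E →L[𝕜] E} (hT : (T : E →ₗ[𝕜] E).IsSymmetric)
    {r : ℝ} (hr : 0 ≤ r) (h : ∀ x, |T.reApplyInnerSelf x| ≤ r * ‖x‖ ^ 2) : ‖T‖ ≤ r := by
  rw [T.norm_eq_iSup_rayleighQuotient hT]
  refine ciSup_le fun x => ?_
  rw [abs_div, abs_sq]
  exact div_le_of_le_mul₀ (sq_nonneg _) hr (h x)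

end ContinuousLinearMap

namespace Matrix

section Blocks

variable {m n R : Type*} [Ring R] [PartialOrder R] [StarRing R]

theorem PosSemidef.of_fromBlocks₁₁ {A : Matrix m m R} {B : Matrix m n R} {C : Matrix n m R}
    {D : Matrix n n R} (h : (fromBlocks A B C D).PosSemidef) : A.PosSemidef :=
  h.submatrix Sum.inl

theorem PosSemidef.of_fromBlocks₂₂ {A : Matrix m m R} {B : Matrix m n R} {C : Matrix n m R}
    {D : Matrix n n R} (h : (fromBlocks A B C D).PosSemidef) : D.PosSemidef :=
  h.submatrix Sum.inr

theorem PosSemidef.add_add_add_of_fromBlocks [Fintype n] [DecidableEq n]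
    {A B C D : Matrix n n R} (h : (fromBlocks A B C D).PosSemidef) :
    (A + B + C + D).PosSemidef := by
  have := h.conjTranspose_mul_mul_same (fromRows (1 : Matrix n n R) 1)
  rw [conjTranspose_fromRows_eq_fromCols_conjTranspose, Matrix.mul_assoc, fromBlocks_mul_fromRows,
    fromCols_mul_fromRows] at this
  simpa only [conjTranspose_one, Matrix.one_mul, Matrix.mul_one, add_assoc] using this

end Blocks

variable {n 𝕜 : Type*} [Fintype n] [DecidableEq n] [RCLike 𝕜]

theorem re_inner_toEuclideanLin_smul_one (r : ℝ) (x : EuclideanSpace 𝕜 n) :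
    RCLike.re (inner 𝕜 (toEuclideanLin (r • 1 : Matrix n n 𝕜) x) x) = r * ‖x‖ ^ 2 := by
  have : toEuclideanLin (r • 1 : Matrix n n 𝕜) x = (r : 𝕜) • x := by
    ext i
    simp [toEuclideanLin, smul_mulVec]
  rw [this, inner_smul_real_left, RCLike.smul_re, inner_self_eq_norm_sq]

open scoped ComplexOrder in
theorem norm_toEuclideanCLM_le_of_posSemidef {A : Matrix n n 𝕜} {r : ℝ} (hr : 0 ≤ r)
    (h₁ : (A + r • 1).PosSemidef) (h₂ : (r • 1 - A).PosSemidef) :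
    ‖toEuclideanCLM (𝕜 := 𝕜) A‖ ≤ r := by
  have hA : A.IsHermitian := by
    simpa using h₁.isHermitian.sub (isHermitian_one.smul (IsSelfAdjoint.all r))
  refine ContinuousLinearMap.norm_le_of_abs_reApplyInnerSelf_le
    (isSymmetric_toEuclideanLin_iff.mpr hA) hr fun x => abs_le.mpr ⟨?_, ?_⟩
  · have := (isPositive_toEuclideanLin_iff.mpr h₁).re_inner_nonneg_left x
    rw [map_add, LinearMap.add_apply, inner_add_left, map_add,
      re_inner_toEuclideanLin_smul_one] at this
    rw [ContinuousLinearMap.reApplyInnerSelf_apply]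
    exact neg_le_iff_add_nonneg.mpr this
  · have := (isPositive_toEuclideanLin_iff.mpr h₂).re_inner_nonneg_left x
    rw [map_sub, LinearMap.sub_apply, inner_sub_left, map_sub,
      re_inner_toEuclideanLin_smul_one] at this
    rw [ContinuousLinearMap.reApplyInnerSelf_apply]
    exact sub_nonneg.mp this

end Matrix

theorem block_inequalities_imply_order_and_opNorm_bounds_general {n : ℕ} (α : ℝ) (hα : 0 < α)
    (X Y : Matrix (Fin n) (Fin n) ℝ)
    (h₁ : (Matrix.fromBlocks X 0 0 (-Y)
        - (-(3 * α)) • (1 : Matrix (Fin n ⊕ Fin n) (Fin n ⊕ Fin n) ℝ)).PosSemidef)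
    (h₂ : (Matrix.fromBlocks ((3 * α) • (1 : Matrix (Fin n) (Fin n) ℝ))
            ((3 * α) • (-1 : Matrix (Fin n) (Fin n) ℝ))
            ((3 * α) • (-1 : Matrix (Fin n) (Fin n) ℝ))
            ((3 * α) • (1 : Matrix (Fin n) (Fin n) ℝ))
          - Matrix.fromBlocks X 0 0 (-Y)).PosSemidef) :
    (Y - X).PosSemidef ∧
      ‖Matrix.toEuclideanCLM (𝕜 := ℝ) X‖ ≤ 3 * α ∧
      ‖Matrix.toEuclideanCLM (𝕜 := ℝ) Y‖ ≤ 3 * α := by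
  set s := 3 * α
  have hs : 0 ≤ s := by positivity
  have h₁' : (fromBlocks (X + s • 1) 0 0 (s • 1 - Y)).PosSemidef := by
    rwa [neg_smul, sub_neg_eq_add, ← fromBlocks_one, fromBlocks_smul, fromBlocks_add, smul_zero,
      add_zero, neg_add_eq_sub] at h₁
  have h₂' : (fromBlocks (s • 1 - X) (-(s • 1)) (-(s • 1)) (Y + s • 1)).PosSemidef := by
    rwa [sub_eq_add_neg, fromBlocks_neg, fromBlocks_add, neg_zero, add_zero, neg_neg, smul_neg,
      ← sub_eq_add_neg, add_comm (s • 1) Y] at h₂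
  refine ⟨?_, norm_toEuclideanCLM_le_of_posSemidef hs h₁'.of_fromBlocks₁₁ h₂'.of_fromBlocks₁₁,
    norm_toEuclideanCLM_le_of_posSemidef hs h₂'.of_fromBlocks₂₂ h₁'.of_fromBlocks₂₂⟩
  convert h₂'.add_add_add_of_fromBlocks using 1
  abel

/-- If `−3α[[I,0],[0,I]] ≤ [[X,0],[0,−Y]] ≤ 3α[[I,−I],[−I,I]]` with `α > 0`,
then `X ≤ Y` and `‖X‖, ‖Y‖ ≤ 3α` in operator (spectral) norm. -/
theorem block_inequalities_imply_order_and_opNorm_bounds {n : ℕ} (α : ℝ) (hα : 0 < α)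
    (X Y : Matrix (Fin n) (Fin n) ℝ) (hX : X.IsSymm) (hY : Y.IsSymm)
    (h₁ : (Matrix.fromBlocks X 0 0 (-Y)
        - (-(3 * α)) • (1 : Matrix (Fin n ⊕ Fin n) (Fin n ⊕ Fin n) ℝ)).PosSemidef)
    (h₂ : (Matrix.fromBlocks ((3 * α) • (1 : Matrix (Fin n) (Fin n) ℝ))
            ((3 * α) • (-1 : Matrix (Fin n) (Fin n) ℝ))
            ((3 * α) • (-1 : Matrix (Fin n) (Fin n) ℝ))
            ((3 * α) • (1 : Matrix (Fin n) (Fin n) ℝ))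
          - Matrix.fromBlocks X 0 0 (-Y)).PosSemidef) :
    (Y - X).PosSemidef ∧
      ‖Matrix.toEuclideanCLM (𝕜 := ℝ) X‖ ≤ 3 * α ∧
      ‖Matrix.toEuclideanCLM (𝕜 := ℝ) Y‖ ≤ 3 * α :=
  block_inequalities_imply_order_and_opNorm_bounds_general α hα X Y h₁ h₂
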